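/- arXiv:2311.02137 — 2 statements merged into one kernel-verified Lean document; each statement's English description precedes it below -/
import Mathlib

section
/- Let p be an odd prime, let G = Sₚ × C₂, and let ε be the one-dimensional representation of G on ℚ with (ρ, c) acting as multiplication by (−1)ᶜ. Let H' ≤ G be the subgroup generated by the elements (π, 0) for permutations π fixing p−1 and p, together with ((p−1 p), 1). Then the fixed subspace of ε under Stab(1)×{0} is all of ℚ, the fixed subspace under Sₚ×{0} is all of ℚ, and the fixed subspace under H' is 0. Consequently, for all nonzero u, v ∈ ℚ, the quantity ((1/(p−1)!)·u²) / ((1/p!)·v²) lies in p·(ℚ^×)²; that is, the regulator constant 𝒞_Θ(ε) ≡ p mod (ℚ^×)² for Θ = (S_{p−1}×{e}) − (Sₚ×{e}) − H'. -/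
/-- The sign `(−1)ᶜ` for `c ∈ C₂ = ℤ/2ℤ` (written multiplicatively); this is how `(ρ,c) ∈ Sₚ × C₂`
acts on the one-dimensional representation `ε`. -/
def C2Sign (c : Multiplicative (ZMod 2)) : ℚ := (-1 : ℚ) ^ (Multiplicative.toAdd c).val

/-- The subgroup `H' ≤ Sₚ × C₂` generated by the elements `(π, 0)` with `π` fixing `a` and `b`,
together with `((a b), 1)`. -/
def Hprime (p : ℕ) (a b : Fin p) : Subgroup (Equiv.Perm (Fin p) × Multiplicative (ZMod 2)) :=
  Subgroup.closure
    ({g | g.2 = 1 ∧ g.1 a = a ∧ g.1 b = b} ∪ {(Equiv.swap a b, Multiplicative.ofAdd 1)})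

open Nat

theorem C2Sign_mul_eq_self_of_eq_one {c : Multiplicative (ZMod 2)} (hc : c = 1) (t : ℚ) :
    C2Sign c * t = t := by
  subst hc
  simp [C2Sign]

theorem C2Sign_ofAdd_one : C2Sign (Multiplicative.ofAdd 1) = -1 := by
  rw [C2Sign, toAdd_ofAdd, ZMod.val_one, pow_one]

theorem swap_mem_Hprime (p : ℕ) (a b : Fin p) :
    (Equiv.swap a b, Multiplicative.ofAdd 1) ∈ Hprime p a b :=
  Subgroup.subset_closure (Or.inr rfl)

theorem eq_zero_of_forall_mem_Hprime {p : ℕ} {a b : Fin p} {t : ℚ}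
    (h : ∀ g ∈ Hprime p a b, C2Sign g.2 * t = t) : t = 0 := by
  have hswap := h _ (swap_mem_Hprime p a b)
  rw [C2Sign_ofAdd_one] at hswap
  linarith

theorem inv_factorial_pred_mul_div_inv_factorial_mul {K : Type*} [Field K] [CharZero K]
    {n : ℕ} (hn : 0 < n) (u : K) {v : K} (hv : v ≠ 0) :
    (1 / ((n - 1)! : K) * u ^ 2) / (1 / (n ! : K) * v ^ 2) = n * (u / v) ^ 2 := by
  have hfact : (n ! : K) = n * ((n - 1)! : K) := by
    rw [← Nat.mul_factorial_pred hn.ne']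
    push_cast
    ring
  have hpred : ((n - 1)! : K) ≠ 0 := Nat.cast_ne_zero.mpr (n - 1).factorial_ne_zero
  rw [hfact]
  field_simp

theorem regulator_constant_epsilon_general (p : ℕ) (hp : p.Prime)
    (a b : Fin p) :
    ({t : ℚ | ∀ g : Equiv.Perm (Fin p) × Multiplicative (ZMod 2),
        g.2 = 1 → g.1 ⟨0, hp.pos⟩ = ⟨0, hp.pos⟩ → C2Sign g.2 * t = t} = Set.univ) ∧
    ({t : ℚ | ∀ g : Equiv.Perm (Fin p) × Multiplicative (ZMod 2),
        g.2 = 1 → C2Sign g.2 * t = t} = Set.univ) ∧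
    ({t : ℚ | ∀ g ∈ Hprime p a b, C2Sign g.2 * t = t} = {0}) ∧
    ∀ u v : ℚ, u ≠ 0 → v ≠ 0 →
      ∃ q : ℚ, q ≠ 0 ∧
        (1 / ((p - 1).factorial : ℚ) * u ^ 2) / (1 / (p.factorial : ℚ) * v ^ 2) = p * q ^ 2 := by
  refine ⟨?_, ?_, ?_, ?_⟩
  · exact Set.eq_univ_of_forall fun t g hg _ => C2Sign_mul_eq_self_of_eq_one hg t
  · exact Set.eq_univ_of_forall fun t g hg => C2Sign_mul_eq_self_of_eq_one hg t
  · ext t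
    exact ⟨eq_zero_of_forall_mem_Hprime, fun ht _ _ => by simp [Set.mem_singleton_iff.mp ht]⟩
  · intro u v hu hv
    exact ⟨u / v, div_ne_zero hu hv, inv_factorial_pred_mul_div_inv_factorial_mul hp.pos u hv⟩

/-- For the one-dimensional representation `ε` of `G = Sₚ × C₂` on `ℚ`, with `(ρ,c)` acting by
`(−1)ᶜ`: the fixed subspace under `Stab(1)×{0}` is all of `ℚ`, under `Sₚ×{0}` is all of `ℚ`, and
under `H'` is `0`. Consequently for all nonzero `u, v ∈ ℚ`,
`((1/(p−1)!)·u²)/((1/p!)·v²)` lies in `p·(ℚ^×)²`; i.e. the regulator constant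
`𝒞_Θ(ε) ≡ p mod (ℚ^×)²` for `Θ = (S_{p−1}×{e}) − (Sₚ×{e}) − H'`. -/
theorem regulator_constant_epsilon (p : ℕ) (hp : p.Prime) (hodd : Odd p)
    (a b : Fin p) (ha : (a : ℕ) = p - 2) (hb : (b : ℕ) = p - 1) :
    ({t : ℚ | ∀ g : Equiv.Perm (Fin p) × Multiplicative (ZMod 2),
        g.2 = 1 → g.1 ⟨0, hp.pos⟩ = ⟨0, hp.pos⟩ → C2Sign g.2 * t = t} = Set.univ) ∧
    ({t : ℚ | ∀ g : Equiv.Perm (Fin p) × Multiplicative (ZMod 2),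
        g.2 = 1 → C2Sign g.2 * t = t} = Set.univ) ∧
    ({t : ℚ | ∀ g ∈ Hprime p a b, C2Sign g.2 * t = t} = {0}) ∧
    ∀ u v : ℚ, u ≠ 0 → v ≠ 0 →
      ∃ q : ℚ, q ≠ 0 ∧
        (1 / ((p - 1).factorial : ℚ) * u ^ 2) / (1 / (p.factorial : ℚ) * v ^ 2) = p * q ^ 2 :=
  regulator_constant_epsilon_general p hp a b
end

section
/- Let p be an odd prime, G = Sₚ × C₂, and let H' ≤ G be the subgroup generated by the elements (π, 0) for permutations π fixing p−1 and p, together with ((p−1 p), 1). Let τ = (t, 1) ∈ G where t ∈ Sₚ is a product of (p−1)/2 disjoint transpositions and 1 is the nontrivial element of C₂. Then the number of double cosets ⟨τ⟩\G/H' equals (p² − 1)/2. -/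
open MulAction

section Orbits

variable {G X : Type*} [Group G] [MulAction G X]

theorem MulAction.doubleCoset_rel_stabilizer_iff (H : Subgroup G) (x : X) (g g' : G) :
    DoubleCoset.setoid (H : Set G) (stabilizer G x) g g' ↔ ∃ h ∈ H, h • g' • x = g • x := by
  rw [DoubleCoset.rel_iff]
  constructor
  · rintro ⟨h, hh, k, hk, rfl⟩
    refine ⟨h⁻¹, inv_mem hh, ?_⟩
    rw [mul_smul, mul_smul, mem_stabilizer_iff.mp hk, inv_smul_smul]
  · rintro ⟨h, hh, hx⟩
    refine ⟨h⁻¹, inv_mem hh, g⁻¹ * h * g', ?_, by group⟩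
    rw [mem_stabilizer_iff, mul_smul, mul_smul, hx, inv_smul_smul]

noncomputable def MulAction.doubleCosetQuotientStabilizerEquiv (H : Subgroup G) (x : X) :
    DoubleCoset.Quotient (H : Set G) (stabilizer G x) ≃ orbitRel.Quotient H (orbit G x) :=
  Equiv.ofBijective
    (Quotient.map' (fun g => (⟨g • x, mem_orbit x g⟩ : orbit G x)) fun g g' hg => by
      obtain ⟨h, hh, hx⟩ := (doubleCoset_rel_stabilizer_iff H x g g').mp hg
      exact ⟨⟨h, hh⟩, Subtype.ext hx⟩)
    ⟨by
      rintro ⟨g⟩ ⟨g'⟩ hg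
      obtain ⟨⟨h, hh⟩, hx⟩ := Quotient.exact' hg
      exact Quotient.sound' ((doubleCoset_rel_stabilizer_iff H x g g').mpr
        ⟨h, hh, congrArg Subtype.val hx⟩),
    by
      rintro ⟨⟨y, g, rfl⟩⟩
      exact ⟨Quotient.mk'' g, rfl⟩⟩

theorem MulAction.two_mul_card_orbitRel_zpowers [Finite X] {τ : G} (hτ : orderOf τ = 2) :
    2 * Nat.card (orbitRel.Quotient (Subgroup.zpowers τ) X) =
      Nat.card X + Nat.card (fixedBy X τ) := by
  classical
  have hcard : Nat.card (Subgroup.zpowers τ) = 2 := by rw [Nat.card_zpowers, hτ]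
  have : Finite (Subgroup.zpowers τ) := Nat.finite_of_card_ne_zero (by omega)
  have : Fintype (Subgroup.zpowers τ) := Fintype.ofFinite _
  have : Fintype X := Fintype.ofFinite X
  have : Fintype (orbitRel.Quotient (Subgroup.zpowers τ) X) := Fintype.ofFinite _
  have hτ1 : τ ≠ 1 := by rintro rfl; simp at hτ
  have hne : (1 : Subgroup.zpowers τ) ≠ ⟨τ, Subgroup.mem_zpowers τ⟩ :=
    fun h => hτ1 (congrArg Subtype.val h).symm
  have huniv : (Finset.univ : Finset (Subgroup.zpowers τ)) = {1, ⟨τ, Subgroup.mem_zpowers τ⟩} :=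
    (Finset.eq_univ_of_card _ (by rw [Finset.card_pair hne, ← Nat.card_eq_fintype_card, hcard])).symm
  have := sum_card_fixedBy_eq_card_orbits_mul_card_group (Subgroup.zpowers τ) X
  rw [huniv, Finset.sum_pair hne] at this
  simp only [← Nat.card_eq_fintype_card, fixedBy_one_eq_univ, Nat.card_univ] at this hcard
  rw [hcard] at this
  change Nat.card X + Nat.card (fixedBy X τ) =
    Nat.card (orbitRel.Quotient (Subgroup.zpowers τ) X) * 2 at this
  omega

end Orbits

open Equiv Multiplicative

theorem Multiplicative.zmod_two_eq_one_or (e : Multiplicative (ZMod 2)) : e = 1 ∨ e = ofAdd 1 := by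
  revert e; decide

theorem orderOf_prod_ofAdd_one {M : Type*} [Monoid M] {m : M} (hm : m ^ 2 = 1) :
    orderOf ((m, ofAdd 1) : M × Multiplicative (ZMod 2)) = 2 :=
  orderOf_eq_prime (Prod.ext hm (show ofAdd (1 : ZMod 2) ^ 2 = 1 by decide)) fun h => by
    simpa using congrArg (fun g => toAdd g.2) h

section PairAction

variable {α : Type*}

instance Equiv.Perm.prodZModTwoMulAction : MulAction (Perm α × Multiplicative (ZMod 2)) (α × α) where
  smul g z := if g.2 = 1 then (g.1 z.1, g.1 z.2) else (g.1 z.2, g.1 z.1)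
  one_smul z := if_pos rfl
  mul_smul := by
    rintro ⟨σ, e⟩ ⟨σ', e'⟩ z
    rcases e.zmod_two_eq_one_or with rfl | rfl <;> rcases e'.zmod_two_eq_one_or with rfl | rfl <;>
      simp [HSMul.hSMul, show (ofAdd 1 * ofAdd 1 : Multiplicative (ZMod 2)) = 1 by decide]

@[simp]
theorem Equiv.Perm.prodZModTwo_one_smul (σ : Perm α) (z : α × α) :
    ((σ, 1) : Perm α × Multiplicative (ZMod 2)) • z = (σ z.1, σ z.2) := rfl

@[simp]
theorem Equiv.Perm.prodZModTwo_ofAdd_one_smul (σ : Perm α) (z : α × α) :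
    ((σ, ofAdd 1) : Perm α × Multiplicative (ZMod 2)) • z = (σ z.2, σ z.1) :=
  if_neg (show ofAdd (1 : ZMod 2) ≠ 1 by decide)

theorem Equiv.Perm.exists_apply_eq_and_apply_eq [DecidableEq α] {a b x y : α} (hab : a ≠ b)
    (hxy : x ≠ y) : ∃ σ : Perm α, σ a = x ∧ σ b = y := by
  refine ⟨swap (swap a x b) y * swap a x, ?_, by simp⟩
  rw [Perm.mul_apply, swap_apply_left, swap_apply_of_ne_of_ne _ hxy]
  exact fun h => hab ((swap a x).injective (by rw [swap_apply_left]; exact h.symm)).symm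

theorem Equiv.Perm.orbit_prodZModTwo {a b : α} (hab : a ≠ b) :
    orbit (Perm α × Multiplicative (ZMod 2)) (a, b) = {z | z.1 ≠ z.2} := by
  classical
  ext z
  constructor
  · rintro ⟨⟨σ, e⟩, rfl⟩
    rcases e.zmod_two_eq_one_or with rfl | rfl
    · simpa using hab
    · simpa using hab.symm
  · intro hz
    obtain ⟨σ, hσa, hσb⟩ := Perm.exists_apply_eq_and_apply_eq hab hz
    exact ⟨(σ, 1), by simp [hσa, hσb]⟩

theorem Equiv.Perm.card_orbit_prodZModTwo [Fintype α] {a b : α} (hab : a ≠ b) :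
    Nat.card (orbit (Perm α × Multiplicative (ZMod 2)) (a, b)) =
      Fintype.card α ^ 2 - Fintype.card α := by
  classical
  have : orbit (Perm α × Multiplicative (ZMod 2)) (a, b) =
      ((Finset.univ.offDiag : Finset (α × α)) : Set (α × α)) := by
    rw [orbit_prodZModTwo hab]; ext; simp
  rw [this, Nat.card_coe_set_eq, Set.ncard_coe_finset, Finset.offDiag_card, Finset.card_univ, sq]

theorem Equiv.Perm.prodZModTwo_ofAdd_one_smul_eq_self_iff {σ : Perm α}
    (hσ : σ ^ 2 = 1) (z : α × α) :
    ((σ, ofAdd 1) : Perm α × Multiplicative (ZMod 2)) • z = z ↔ σ z.1 = z.2 := by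
  have hσσ (x : α) : σ (σ x) = x := by rw [← Perm.mul_apply, ← sq, hσ, Perm.one_apply]
  rw [prodZModTwo_ofAdd_one_smul, Prod.ext_iff]
  exact ⟨And.right, fun h => ⟨by rw [← h, hσσ], h⟩⟩

theorem Equiv.Perm.card_fixedBy_orbit_prodZModTwo [Fintype α] [DecidableEq α]
    {a b : α} (hab : a ≠ b) {σ : Perm α} (hσ : σ ^ 2 = 1) :
    Nat.card (fixedBy (orbit (Perm α × Multiplicative (ZMod 2)) (a, b))
      ((σ, ofAdd 1) : Perm α × Multiplicative (ZMod 2))) = σ.support.card := by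
  have hmem (z : α × α) : z ∈ orbit (Perm α × Multiplicative (ZMod 2)) (a, b) ↔ z.1 ≠ z.2 := by
    rw [orbit_prodZModTwo hab]; rfl
  have hfixed (z : orbit (Perm α × Multiplicative (ZMod 2)) (a, b)) :
      z ∈ fixedBy _ ((σ, ofAdd 1) : Perm α × Multiplicative (ZMod 2)) ↔ σ z.1.1 = z.1.2 := by
    rw [mem_fixedBy, Subtype.ext_iff, orbit.coe_smul, prodZModTwo_ofAdd_one_smul_eq_self_iff hσ]
  rw [← Nat.card_eq_finsetCard]
  exact Nat.card_congr
    { toFun z := ⟨z.1.1.1, Perm.mem_support.mpr <| by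
        rw [(hfixed z.1).mp z.2]; exact ((hmem _).mp z.1.2).symm⟩
      invFun x := ⟨⟨(x, σ x), (hmem _).mpr (Perm.mem_support.mp x.2).symm⟩, (hfixed _).mpr rfl⟩
      left_inv z := Subtype.ext (Subtype.ext (Prod.ext rfl ((hfixed z.1).mp z.2)))
      right_inv _ := rfl }

end PairAction

theorem Hprime_eq_stabilizer (p : ℕ) (a b : Fin p) :
    Hprime p a b = stabilizer (Perm (Fin p) × Multiplicative (ZMod 2)) (a, b) := by
  refine le_antisymm ((Subgroup.closure_le _).mpr ?_) fun g hg => ?_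
  · rintro ⟨σ, e⟩ (⟨rfl, ha, hb⟩ | ⟨⟨⟩⟩)
    · simp [mem_stabilizer_iff, ha, hb]
    · simp [mem_stabilizer_iff]
  · obtain ⟨σ, e⟩ := g
    have generator_mem (π : Perm (Fin p)) (ha : π a = a) (hb : π b = b) :
        ((π, 1) : Perm (Fin p) × Multiplicative (ZMod 2)) ∈ Hprime p a b :=
      Subgroup.subset_closure (Or.inl ⟨rfl, ha, hb⟩)
    rcases e.zmod_two_eq_one_or with rfl | rfl <;>
      simp only [mem_stabilizer_iff, Perm.prodZModTwo_one_smul, Perm.prodZModTwo_ofAdd_one_smul,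
        Prod.mk.injEq] at hg
    · exact generator_mem σ hg.1 hg.2
    · have hσ : ((σ, ofAdd 1) : Perm (Fin p) × Multiplicative (ZMod 2)) =
          (σ * swap a b, 1) * (swap a b, ofAdd 1) := by
        simp [mul_assoc]
      rw [hσ]
      exact mul_mem (generator_mem _ (by simp [hg.1]) (by simp [hg.2]))
        (Subgroup.subset_closure (Or.inr rfl))

/-- For `τ = (t, 1) ∈ G = Sₚ × C₂` with `t` a product of `(p−1)/2` disjoint transpositions
and `1` the nontrivial element of `C₂`, the number of double cosets `⟨τ⟩\G/H'` is `(p² − 1)/2`. -/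
theorem double_coset_count_big (p : ℕ) (hp : p.Prime) (hodd : Odd p)
    (a b : Fin p) (ha : (a : ℕ) = p - 2) (hb : (b : ℕ) = p - 1)
    (t : Equiv.Perm (Fin p))
    (ht : t.cycleType = Multiset.replicate ((p - 1) / 2) 2) :
    Nat.card (DoubleCoset.Quotient
        ((Subgroup.zpowers ((t, Multiplicative.ofAdd 1) :
            Equiv.Perm (Fin p) × Multiplicative (ZMod 2)) :
          Subgroup (Equiv.Perm (Fin p) × Multiplicative (ZMod 2))) :
            Set (Equiv.Perm (Fin p) × Multiplicative (ZMod 2)))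
        ((Hprime p a b : Subgroup (Equiv.Perm (Fin p) × Multiplicative (ZMod 2))) :
            Set (Equiv.Perm (Fin p) × Multiplicative (ZMod 2))))
      = (p ^ 2 - 1) / 2 := by
  have hab : a ≠ b := fun h => by
    have := hp.two_le
    rw [h, hb] at ha
    omega
  have ht2 : t ^ 2 = 1 := by
    rw [← orderOf_dvd_iff_pow_eq_one, ← Perm.lcm_cycleType, ht]
    exact Multiset.lcm_dvd.mpr fun n hn => by rw [Multiset.eq_of_mem_replicate hn]
  have hsupport : t.support.card = p - 1 := by
    rw [← Perm.sum_cycleType, ht, Multiset.sum_replicate, smul_eq_mul]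
    obtain ⟨k, rfl⟩ := hodd
    omega
  have hburnside := two_mul_card_orbitRel_zpowers
    (X := orbit (Perm (Fin p) × Multiplicative (ZMod 2)) (a, b)) (orderOf_prod_ofAdd_one ht2)
  rw [Perm.card_fixedBy_orbit_prodZModTwo hab ht2, hsupport,
    Perm.card_orbit_prodZModTwo hab, Fintype.card_fin] at hburnside
  rw [Hprime_eq_stabilizer, Nat.card_congr (doubleCosetQuotientStabilizerEquiv _ _)]
  have : p ≤ p ^ 2 := Nat.le_self_pow two_ne_zero p
  omega
end
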